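/- For all integers k ≥ 1 and r ≥ 2, the sum of all edge weights of the weighted directed graph L_{k,r} is at most 2k(r+1)r^{k−1}. -/

import Mathlib

open Finset

namespace TSPGap


/-! ### Lovász–Schrijver lift-and-project operators -/

/-- `cone(R) = {(λ, λx) : λ ≥ 0, x ∈ R}`, with the extra 0th coordinate first. -/
def lsCone {ι : Type*} (R : Set (ι → ℝ)) : Set (ℝ × (ι → ℝ)) :=
  {p | ∃ c : ℝ, ∃ y ∈ R, 0 ≤ c ∧ p.1 = c ∧ p.2 = fun i => c * y i}

/-- `X` is a protection matrix witnessing `x ∈ N(R)`: it is symmetric, its 0th row and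
diagonal both equal `(1, x)`, and each row `X_i` and difference `X_0 - X_i` lies in `cone(R)`. -/
def IsProtection {ι : Type*} (R : Set (ι → ℝ)) (x : ι → ℝ)
    (X : Option ι → Option ι → ℝ) : Prop :=
  (∀ i j, X i j = X j i) ∧
  X none none = 1 ∧
  (∀ i, X none (some i) = x i) ∧
  (∀ i, X (some i) (some i) = x i) ∧
  (∀ i, (X (some i) none, fun j => X (some i) (some j)) ∈ lsCone R) ∧
  (∀ i, (X none none - X (some i) none,
         fun j => X none (some j) - X (some i) (some j)) ∈ lsCone R)

/-- The Lovász–Schrijver `N` operator. -/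
def lsN {ι : Type*} (R : Set (ι → ℝ)) : Set (ι → ℝ) :=
  {x | ∃ X : Option ι → Option ι → ℝ, IsProtection R x X}

/-- The Lovász–Schrijver `N₊` operator (protection matrix additionally PSD). -/
def lsNplus {ι : Type*} [Fintype ι] (R : Set (ι → ℝ)) : Set (ι → ℝ) :=
  {x | ∃ X : Matrix (Option ι) (Option ι) ℝ, X.PosSemidef ∧
        IsProtection R x (fun i j => X i j)}

/-! ### Directed graphs -/

variable {V : Type*} [DecidableEq V]

/-- The list of (directed) steps of a walk given by its list of vertices. -/
def dSteps (l : List V) : List (V × V) := l.zip l.tail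

/-- The steps of a closed walk given by its list of vertices. -/
def cycSteps (l : List V) : List (V × V) := l.zip (l.rotate 1)

/-- `l` is a directed walk from `u` to `v` using edges of `E`. -/
def IsDWalk (E : Finset (V × V)) (u v : V) (l : List V) : Prop :=
  l.head? = some u ∧ l.getLast? = some v ∧ ∀ a ∈ dSteps l, a ∈ E

/-- Total weight of a walk. -/
def dWalkWeight (w : V × V → ℝ) (l : List V) : ℝ := ((dSteps l).map w).sum

/-- Shortest-path distance from `u` to `v` in the weighted directed graph `(E, w)`. -/
noncomputable def dDist (E : Finset (V × V)) (w : V × V → ℝ) (u v : V) : ℝ :=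
  sInf {c | ∃ l : List V, IsDWalk E u v l ∧ dWalkWeight w l = c}

/-- `x(δ⁺(S))`. -/
def outCut (E : Finset (V × V)) (x : ↥E → ℝ) (S : Finset V) : ℝ :=
  ∑ e ∈ E.attach.filter (fun e => e.val.1 ∈ S ∧ e.val.2 ∉ S), x e

/-- `x(δ⁻(S))`. -/
def inCut (E : Finset (V × V)) (x : ↥E → ℝ) (S : Finset V) : ℝ :=
  ∑ e ∈ E.attach.filter (fun e => e.val.1 ∉ S ∧ e.val.2 ∈ S), x e

/-- `d · x = ∑_e d_e x_e` over the edge set `E`. -/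
def dDot (E : Finset (V × V)) (d : V × V → ℝ) (x : ↥E → ℝ) : ℝ :=
  ∑ e ∈ E.attach, d e.val * x e

/-- The balanced asymmetric tour polytope of the directed graph with node set `VS`
and edge set `E`. -/
def ATbal (VS : Finset V) (E : Finset (V × V)) : Set (↥E → ℝ) :=
  {x | (∀ e, 0 ≤ x e ∧ x e ≤ 1) ∧
       (∀ S : Finset V, S ⊆ VS → S.Nonempty → S ≠ VS →
          1 ≤ outCut E x S ∧ 1 ≤ inCut E x S) ∧
       (∀ v ∈ VS, outCut E x {v} = inCut E x {v})}

/-- Indicator vectors of Hamiltonian cycles (on node set `VS`) among edges `E`. -/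
def hamCycleVecs (VS : Finset V) (E : Finset (V × V)) : Set (↥E → ℝ) :=
  {x | ∃ c : List V, 2 ≤ c.length ∧ c.Nodup ∧ c.toFinset = VS ∧
        (∀ a ∈ cycSteps c, a ∈ E) ∧
        ∀ e : ↥E, x e = if e.val ∈ cycSteps c then 1 else 0}

/-- Edge set of the complete directed graph on the node set `VS` (no self-loops). -/
def dComplete (VS : Finset V) : Finset (V × V) := (VS ×ˢ VS).filter (fun e => e.1 ≠ e.2)

/-- Edge set of the complete directed graph on all of `V` (no self-loops). -/
def dCompleteAll (V : Type*) [Fintype V] [DecidableEq V] : Finset (V × V) :=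
  Finset.univ.filter (fun e => e.1 ≠ e.2)

/-- Out-degree of `v` in edge set `E`. -/
def outDeg (E : Finset (V × V)) (v : V) : ℕ := (E.filter (fun e => e.1 = v)).card

/-- In-degree of `v` in edge set `E`. -/
def inDeg (E : Finset (V × V)) (v : V) : ℕ := (E.filter (fun e => e.2 = v)).card

/-- A frame for the edge `e = (u,v)`: a set `F ⊆ E \ {e}` consisting of an edge-simple
path from `u` to `v` together with zero or more edge-simple cycles, all pairwise
edge-disjoint. -/
def IsFrame (E : Finset (V × V)) (e : V × V) (F : Finset (V × V)) : Prop :=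
  F ⊆ E.erase e ∧
  ∃ (p : List V) (cs : List (List V)),
    p.head? = some e.1 ∧ p.getLast? = some e.2 ∧ (∀ a ∈ dSteps p, a ∈ E) ∧
    (∀ c ∈ cs, c ≠ [] ∧ ∀ a ∈ cycSteps c, a ∈ E) ∧
    (dSteps p ++ (cs.map cycSteps).flatten).Nodup ∧
    F = (dSteps p ++ (cs.map cycSteps).flatten).toFinset

/-- There exist two edge-disjoint directed (simple) paths from `u` to `v` in `E`. -/
def TwoEdgeDisjointPaths (E : Finset (V × V)) (u v : V) : Prop :=
  ∃ p q : List V, p.Nodup ∧ q.Nodup ∧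
    p.head? = some u ∧ p.getLast? = some v ∧
    q.head? = some u ∧ q.getLast? = some v ∧
    (∀ a ∈ dSteps p, a ∈ E) ∧ (∀ a ∈ dSteps q, a ∈ E) ∧
    (dSteps p).Disjoint (dSteps q)




/-! ### The Charikar–Goemans–Karloff graphs -/

/-- Vertex type housing the graph `G_{k,r}` (index `k = 0` is a dummy level). -/
def CGKV : ℕ → Type
  | 0 => PUnit
  | 1 => ℕ
  | k + 2 => (ℕ × CGKV (k + 1)) ⊕ Fin 2

instance CGKV.decEq : (k : ℕ) → DecidableEq (CGKV k)
  | 0 => inferInstanceAs (DecidableEq PUnit)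
  | 1 => inferInstanceAs (DecidableEq ℕ)
  | k + 2 =>
      letI : DecidableEq (CGKV (k + 1)) := CGKV.decEq (k + 1)
      inferInstanceAs (DecidableEq ((ℕ × CGKV (k + 1)) ⊕ Fin 2))

/-- The source of `G_{k,r}`. -/
def CGKsrc (r : ℕ) : (k : ℕ) → CGKV k
  | 0 => PUnit.unit
  | 1 => (0 : ℕ)
  | _ + 2 => Sum.inr 0

/-- The sink of `G_{k,r}`. -/
def CGKsnk (r : ℕ) : (k : ℕ) → CGKV k
  | 0 => PUnit.unit
  | 1 => (r + 1 : ℕ)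
  | _ + 2 => Sum.inr 1

/-- The node set of `G_{k,r}`. -/
def CGKVS (r : ℕ) : (k : ℕ) → Finset (CGKV k)
  | 0 => ∅
  | 1 => Finset.range (r + 2)
  | k + 2 =>
      ((Finset.range r) ×ˢ CGKVS r (k + 1)).image Sum.inl ∪ {Sum.inr 0, Sum.inr 1}

/-- The edge set of `G_{k,r}`: at level 1, two oppositely-directed paths of `r+1` edges
on the nodes `0, …, r+1`; at level `k+2`, the edges of the `r` copies of `G_{k+1,r}`
together with a path from the source `s` through the copies' sources to the sink `t`,
and a path from `t` through the copies' sinks (in the opposite order) back to `s`. -/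
def CGKE (r : ℕ) : (k : ℕ) → Finset (CGKV k × CGKV k)
  | 0 => ∅
  | 1 => (dSteps (List.range (r + 2))).toFinset ∪
         (dSteps (List.range (r + 2)).reverse).toFinset
  | k + 2 =>
      (Finset.range r).biUnion
        (fun j => (CGKE r (k + 1)).image (fun e => (Sum.inl (j, e.1), Sum.inl (j, e.2)))) ∪
      (dSteps (Sum.inr 0 ::
        ((List.range r).map (fun j => Sum.inl (j, CGKsrc r (k + 1)))) ++ [Sum.inr 1])).toFinset ∪
      (dSteps (Sum.inr 1 ::
        (((List.range r).map (fun j => Sum.inl (j, CGKsnk r (k + 1)))).reverse) ++ [Sum.inr 0])).toFinset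

/-- Edge weights of `G_{k,r}` (and of `L_{k,r}`): level-`ℓ` edges have weight `r^(ℓ-1)`. -/
def CGKw (r : ℕ) : (k : ℕ) → CGKV k × CGKV k → ℝ
  | 0, _ => 0
  | 1, _ => 1
  | k + 2, e =>
      match e with
      | (Sum.inl (j, u), Sum.inl (j', v)) =>
          if j = j' then CGKw r (k + 1) (u, v) else (r : ℝ) ^ (k + 1)
      | _ => (r : ℝ) ^ (k + 1)

/-- `v₁`: the successor of `s` on the forward path of `G_{k,r}`. -/
def Lv1 (r : ℕ) : (k : ℕ) → CGKV k
  | 0 => PUnit.unit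
  | 1 => (1 : ℕ)
  | k + 2 => Sum.inl (0, CGKsrc r (k + 1))

/-- `v₂`: the predecessor of `t` on the forward path of `G_{k,r}`. -/
def Lv2 (r : ℕ) : (k : ℕ) → CGKV k
  | 0 => PUnit.unit
  | 1 => (r : ℕ)
  | k + 2 => Sum.inl (r - 1, CGKsrc r (k + 1))

/-- `v₃`: the successor of `t` on the backward path of `G_{k,r}`. -/
def Lv3 (r : ℕ) : (k : ℕ) → CGKV k
  | 0 => PUnit.unit
  | 1 => (r : ℕ)
  | k + 2 => Sum.inl (r - 1, CGKsnk r (k + 1))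

/-- `v₄`: the predecessor of `s` on the backward path of `G_{k,r}`. -/
def Lv4 (r : ℕ) : (k : ℕ) → CGKV k
  | 0 => PUnit.unit
  | 1 => (1 : ℕ)
  | k + 2 => Sum.inl (0, CGKsnk r (k + 1))

/-- The node set `V_{k,r}` of `L_{k,r}`: the nodes of `G_{k,r}` minus the two terminals. -/
def LVS (r k : ℕ) : Finset (CGKV k) :=
  ((CGKVS r k).erase (CGKsrc r k)).erase (CGKsnk r k)

/-- The edge set `E_{k,r}` of `L_{k,r}`: the edges of `G_{k,r}` not incident to a terminal,
plus the two new edges `(v₂,v₁)` and `(v₄,v₃)`. -/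
def LE (r k : ℕ) : Finset (CGKV k × CGKV k) :=
  (CGKE r k).filter (fun e =>
    e.1 ≠ CGKsrc r k ∧ e.1 ≠ CGKsnk r k ∧ e.2 ≠ CGKsrc r k ∧ e.2 ≠ CGKsnk r k) ∪
  {(Lv2 r k, Lv1 r k), (Lv4 r k, Lv3 r k)}



/-! ### Undirected graphs -/

variable {V : Type*} [DecidableEq V]

/-- The (undirected) steps of a walk given by its list of vertices. -/
def uSteps (l : List V) : List (Sym2 V) := (l.zip l.tail).map (fun p => Sym2.mk p.1 p.2)

/-- `l` is a walk from `u` to `v` in the undirected edge set `E`. -/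
def IsUWalk (E : Finset (Sym2 V)) (u v : V) (l : List V) : Prop :=
  l.head? = some u ∧ l.getLast? = some v ∧ ∀ e ∈ uSteps l, e ∈ E

/-- Whether the undirected edge `e` crosses the cut `(S, S̄)`. -/
def uCrosses (S : Finset V) (e : Sym2 V) : Bool :=
  Sym2.lift ⟨fun a b => xor (decide (a ∈ S)) (decide (b ∈ S)),
    fun a b => Bool.xor_comm _ _⟩ e

/-- `x(δ(S))`. -/
def uCut (E : Finset (Sym2 V)) (x : ↥E → ℝ) (S : Finset V) : ℝ :=
  ∑ e ∈ E.attach.filter (fun e => uCrosses S e.val), x e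

/-- `d · x = ∑_e d_e x_e` over the undirected edge set `E`. -/
def uDot (E : Finset (Sym2 V)) (d : Sym2 V → ℝ) (x : ↥E → ℝ) : ℝ :=
  ∑ e ∈ E.attach, d e.val * x e

/-- The symmetric tour polytope of the undirected graph with node set `VS`, edges `E`. -/
def STpoly (VS : Finset V) (E : Finset (Sym2 V)) : Set (↥E → ℝ) :=
  {x | (∀ e, 0 ≤ x e ∧ x e ≤ 1) ∧
       (∀ S : Finset V, S ⊆ VS → S.Nonempty → S ≠ VS → 2 ≤ uCut E x S) ∧
       (∀ v ∈ VS, uCut E x {v} = 2)}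

/-- The symmetric path polytope of the undirected graph with node set `VS`, edges `E`,
and endpoints `s`, `t`. -/
def SPpoly (VS : Finset V) (E : Finset (Sym2 V)) (s t : V) : Set (↥E → ℝ) :=
  {x | (∀ e, 0 ≤ x e ∧ x e ≤ 1) ∧
       (∀ S : Finset V, S ⊆ VS → S.Nonempty → S ≠ VS →
          (((s ∈ S) ↔ (t ∈ S)) → 2 ≤ uCut E x S) ∧
          (¬((s ∈ S) ↔ (t ∈ S)) → 1 ≤ uCut E x S)) ∧
       (∀ v ∈ VS, v ≠ s → v ≠ t → uCut E x {v} = 2) ∧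
       uCut E x {s} = 1 ∧ uCut E x {t} = 1}

/-- Indicator vectors of Hamiltonian paths from `s` to `t` (on node set `VS`) among
edges `E`. -/
def uHamPathVecs (VS : Finset V) (E : Finset (Sym2 V)) (s t : V) : Set (↥E → ℝ) :=
  {x | ∃ p : List V, p.Nodup ∧ p.toFinset = VS ∧
        p.head? = some s ∧ p.getLast? = some t ∧
        (∀ e ∈ uSteps p, e ∈ E) ∧
        ∀ e : ↥E, x e = if e.val ∈ uSteps p then 1 else 0}

/-- Edge set of the complete undirected graph on all of `V` (no self-loops). -/
def uCompleteAll (V : Type*) [Fintype V] [DecidableEq V] : Finset (Sym2 V) :=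
  Finset.univ.filter (fun e => ¬ e.IsDiag)

/-- Shortest-path distance (number of edges) between the endpoints of `e`, in the
unweighted undirected graph with edge set `E`. -/
noncomputable def uDist (E : Finset (Sym2 V)) (e : Sym2 V) : ℝ :=
  sInf {c | ∃ u v : V, e = s(u, v) ∧
    ∃ l : List V, IsUWalk E u v l ∧ ((uSteps l).length : ℝ) = c}

/-! ### Cheung's graphs -/

/-- The node set `V_{ℓ,q}` of Cheung's graph `G_{ℓ,q}`: a top path and a bottom path of
`ℓ+1` nodes each, a left and a right clique of `3q+3` nodes each, and nodes `s`, `t`. -/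
inductive ChV (l q : ℕ) where
  | top : Fin (l + 1) → ChV l q
  | bot : Fin (l + 1) → ChV l q
  | left : Fin (3 * q + 3) → ChV l q
  | right : Fin (3 * q + 3) → ChV l q
  | vs : ChV l q
  | vt : ChV l q
deriving DecidableEq, Fintype

/-- The edges of the two paths of `G_{ℓ,q}`. -/
def ChEpaths (l q : ℕ) : Finset (Sym2 (ChV l q)) :=
  (Finset.univ : Finset (Fin l)).image
    (fun i => s(ChV.top i.castSucc, ChV.top i.succ)) ∪
  (Finset.univ : Finset (Fin l)).image
    (fun i => s(ChV.bot i.castSucc, ChV.bot i.succ))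

/-- The edges within the two cliques of `G_{ℓ,q}`. -/
def ChEcliques (l q : ℕ) : Finset (Sym2 (ChV l q)) :=
  ((Finset.univ : Finset (Fin (3 * q + 3) × Fin (3 * q + 3))).filter
      (fun p => p.1 ≠ p.2)).image (fun p => s(ChV.left p.1, ChV.left p.2)) ∪
  ((Finset.univ : Finset (Fin (3 * q + 3) × Fin (3 * q + 3))).filter
      (fun p => p.1 ≠ p.2)).image (fun p => s(ChV.right p.1, ChV.right p.2))

/-- The connection edges of `G_{ℓ,q}`: path endpoints to the cliques, `s` to the left
clique, and `t` to the right clique. -/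
def ChEconn (l q : ℕ) : Finset (Sym2 (ChV l q)) :=
  (Finset.univ : Finset (Fin (3 * q + 3))).image (fun i => s(ChV.top 0, ChV.left i)) ∪
  (Finset.univ : Finset (Fin (3 * q + 3))).image (fun i => s(ChV.bot 0, ChV.left i)) ∪
  (Finset.univ : Finset (Fin (3 * q + 3))).image
    (fun i => s(ChV.top (Fin.last l), ChV.right i)) ∪
  (Finset.univ : Finset (Fin (3 * q + 3))).image
    (fun i => s(ChV.bot (Fin.last l), ChV.right i)) ∪
  (Finset.univ : Finset (Fin (3 * q + 3))).image (fun i => s(ChV.vs, ChV.left i)) ∪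
  (Finset.univ : Finset (Fin (3 * q + 3))).image (fun i => s(ChV.vt, ChV.right i))

/-- The edge set `E_{ℓ,q}` of Cheung's graph `G_{ℓ,q}`. -/
def ChE (l q : ℕ) : Finset (Sym2 (ChV l q)) :=
  ChEpaths l q ∪ ChEcliques l q ∪ ChEconn l q

/-- The node set of `G'_{ℓ,q}`: `G_{ℓ,q}` plus `ℓ-1` new internal path nodes. -/
inductive ChV' (l q : ℕ) where
  | old : ChV l q → ChV' l q
  | mid : Fin (l - 1) → ChV' l q
deriving DecidableEq, Fintype

/-- The new `s`–`t` path of `G'_{ℓ,q}` (as a list of nodes; it has `ℓ` edges). -/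
def ChPathList (l q : ℕ) : List (ChV' l q) :=
  ChV'.old ChV.vs :: ((List.finRange (l - 1)).map ChV'.mid ++ [ChV'.old ChV.vt])

/-- The edge set `E'_{ℓ,q}` of `G'_{ℓ,q}`: the (old) edges of `G_{ℓ,q}` together with the
`ℓ` new edges of a path from `s` to `t` through `ℓ-1` new nodes. -/
def ChE' (l q : ℕ) : Finset (Sym2 (ChV' l q)) :=
  (ChE l q).image (Sym2.map ChV'.old) ∪ (uSteps (ChPathList l q)).toFinset


/-!
Every edge added at level `ℓ` of the construction of `G_{k,r}` has weight `r^(ℓ-1)`, and each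
level adds two paths of `r+1` edges. So the total weight `W_k` of `G_{k,r}` satisfies
`W_1 ≤ 2(r+1)` and `W_k ≤ r W_{k-1} + 2(r+1)r^(k-1)`, whence `W_k ≤ 2k(r+1)r^(k-1)`. Passing to
`L_{k,r}` deletes, among others, the edges `(s,v₁)` and `(v₄,s)` of weight `r^(k-1)` and adds
two edges of weight at most `r^(k-1)`, so it does not increase the total weight.
-/

section FinsetSum

variable {ι M : Type*} [AddCommMonoid M] [PartialOrder M] [IsOrderedAddMonoid M]

lemma sum_union_le_add [DecidableEq ι] {f : ι → M} {s t : Finset ι}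
    (hf : ∀ i ∈ s ∩ t, 0 ≤ f i) : ∑ i ∈ s ∪ t, f i ≤ ∑ i ∈ s, f i + ∑ i ∈ t, f i := by
  rw [← Finset.sum_union_inter]
  exact le_add_of_nonneg_right (Finset.sum_nonneg hf)

lemma sum_biUnion_le_sum_sum {κ : Type*} [DecidableEq ι] {f : ι → M} (s : Finset κ)
    (t : κ → Finset ι) (hf : ∀ i, 0 ≤ f i) :
    ∑ i ∈ s.biUnion t, f i ≤ ∑ j ∈ s, ∑ i ∈ t j, f i := by
  classical
  induction s using Finset.induction with
  | empty => simp
  | insert j s hj ih =>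
    rw [Finset.biUnion_insert, Finset.sum_insert hj]
    exact (sum_union_le_add fun i _ => hf i).trans (add_le_add le_rfl ih)

end FinsetSum

section Steps

variable {α : Type*}

lemma length_dSteps (l : List α) : (dSteps l).length = l.length - 1 := by
  simp [dSteps]

lemma mem_dSteps_cons_of_head? {l : List α} {a b : α} (h : l.head? = some b) :
    (a, b) ∈ dSteps (a :: l) := by
  obtain ⟨l, rfl⟩ : ∃ l', l = b :: l' := by
    cases l with
    | nil => simp at h
    | cons x l => exact ⟨l, by simpa using h⟩
  simp [dSteps]

lemma mem_dSteps_append_singleton_of_getLast? {l : List α} {a b : α} (h : l.getLast? = some a) :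
    (a, b) ∈ dSteps (l ++ [b]) := by
  induction l with
  | nil => simp at h
  | cons x t ih =>
    cases t with
    | nil => simp_all [dSteps]
    | cons y t =>
      simp only [dSteps, List.cons_append, List.tail_cons, List.zip_cons_cons, List.mem_cons]
        at ih ⊢
      exact Or.inr (ih (by simpa using h))

lemma sum_toFinset_dSteps_le [DecidableEq α] {M : Type*} [CommSemiring M] [PartialOrder M]
    [IsOrderedRing M] {f : α × α → M} {c : M} (hc : 0 ≤ c) (hf : ∀ e, f e ≤ c) (l : List α) :
    ∑ e ∈ (dSteps l).toFinset, f e ≤ (l.length - 1 : ℕ) * c := by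
  have hcard : (dSteps l).toFinset.card ≤ l.length - 1 :=
    (List.toFinset_card_le _).trans (length_dSteps l).le
  calc ∑ e ∈ (dSteps l).toFinset, f e ≤ (dSteps l).toFinset.card * c := by
        simpa using Finset.sum_le_card_nsmul _ _ _ fun e _ => hf e
    _ ≤ (l.length - 1 : ℕ) * c := by gcongr

end Steps

lemma CGKw_nonneg (r : ℕ) : ∀ k (e : CGKV k × CGKV k), 0 ≤ CGKw r k e
  | 0, _ => le_rfl
  | 1, _ => zero_le_one
  | k + 2, (u, v) => by
    rcases u with ⟨j, u⟩ | _ <;> rcases v with ⟨j', v⟩ | _ <;> simp only [CGKw]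
    · split
      · exact CGKw_nonneg r (k + 1) _
      · positivity
    all_goals positivity

lemma CGKw_le_pow {r : ℕ} (hr : 1 ≤ r) : ∀ k (e : CGKV (k + 1) × CGKV (k + 1)),
    CGKw r (k + 1) e ≤ (r : ℝ) ^ k
  | 0, _ => by simp [CGKw]
  | k + 1, (u, v) => by
    rcases u with ⟨j, u⟩ | _ <;> rcases v with ⟨j', v⟩ | _ <;> simp only [CGKw]
    · split
      · exact (CGKw_le_pow hr k _).trans (pow_le_pow_right₀ (by exact_mod_cast hr) k.le_succ)
      · exact le_rfl
    all_goals exact le_rfl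

lemma CGKw_src_left (r k : ℕ) (v : CGKV (k + 1)) :
    CGKw r (k + 1) (CGKsrc r (k + 1), v) = (r : ℝ) ^ k := by
  cases k
  · simp [CGKw]
  · cases v <;> rfl

lemma CGKw_src_right (r k : ℕ) (v : CGKV (k + 1)) :
    CGKw r (k + 1) (v, CGKsrc r (k + 1)) = (r : ℝ) ^ k := by
  cases k
  · simp [CGKw]
  · rcases v with ⟨_, _⟩ | _ <;> rfl

lemma CGKw_inl_inl (r k j : ℕ) (u v : CGKV (k + 1)) :
    CGKw r (k + 2) (Sum.inl (j, u), Sum.inl (j, v)) = CGKw r (k + 1) (u, v) := by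
  simp [CGKw]

lemma src_Lv1_mem_CGKE {r : ℕ} (hr : 1 ≤ r) (k : ℕ) :
    (CGKsrc r (k + 1), Lv1 r (k + 1)) ∈ CGKE r (k + 1) := by
  cases k with
  | zero =>
    show ((0 : ℕ), (1 : ℕ)) ∈ CGKE r 1
    refine Finset.mem_union_left _ (List.mem_toFinset.mpr ?_)
    rw [List.range_succ_eq_map]
    exact mem_dSteps_cons_of_head? (by simp [List.range_succ_eq_map])
  | succ k =>
    obtain ⟨r, rfl⟩ : ∃ r', r = r' + 1 := ⟨r - 1, by omega⟩
    refine Finset.mem_union_left _ (Finset.mem_union_right _ (List.mem_toFinset.mpr ?_))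
    exact mem_dSteps_cons_of_head? (by simp [List.range_succ_eq_map]; rfl)

lemma Lv4_src_mem_CGKE {r : ℕ} (hr : 1 ≤ r) (k : ℕ) :
    (Lv4 r (k + 1), CGKsrc r (k + 1)) ∈ CGKE r (k + 1) := by
  cases k with
  | zero =>
    show ((1 : ℕ), (0 : ℕ)) ∈ CGKE r 1
    refine Finset.mem_union_right _ (List.mem_toFinset.mpr ?_)
    rw [List.range_succ_eq_map, List.reverse_cons]
    exact mem_dSteps_append_singleton_of_getLast? (by simp [List.range_succ_eq_map])
  | succ k =>
    obtain ⟨r, rfl⟩ : ∃ r', r = r' + 1 := ⟨r - 1, by omega⟩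
    refine Finset.mem_union_right _ (List.mem_toFinset.mpr ?_)
    exact mem_dSteps_append_singleton_of_getLast? (by
      simp only [List.range_succ_eq_map, List.map_cons, List.reverse_cons, ← List.cons_append]
      exact List.getLast?_concat)

lemma CGKsrc_ne_Lv4 (r k : ℕ) : CGKsrc r (k + 1) ≠ Lv4 r (k + 1) := by
  cases k
  · show (0 : ℕ) ≠ 1
    omega
  · exact Sum.inr_ne_inl

lemma sum_CGKw_copies_eq (r k : ℕ) :
    ∑ j ∈ Finset.range r, ∑ e ∈ (CGKE r (k + 1)).image
        (fun e => ((Sum.inl (j, e.1) : CGKV (k + 2)), Sum.inl (j, e.2))), CGKw r (k + 2) e =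
      r * ∑ e ∈ CGKE r (k + 1), CGKw r (k + 1) e := by
  have hcopy : ∀ j, ∑ e ∈ (CGKE r (k + 1)).image
      (fun e => ((Sum.inl (j, e.1) : CGKV (k + 2)), Sum.inl (j, e.2))), CGKw r (k + 2) e =
      ∑ e ∈ CGKE r (k + 1), CGKw r (k + 1) e := fun j => by
    refine (Finset.sum_image fun e _ e' _ h => by simpa [Prod.ext_iff] using h).trans ?_
    exact Finset.sum_congr rfl fun e _ => CGKw_inl_inl r k j e.1 e.2
  simp only [hcopy, Finset.sum_const, Finset.card_range, nsmul_eq_mul]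

lemma sum_CGKw_CGKE_le {r : ℕ} (hr : 1 ≤ r) : ∀ k,
    ∑ e ∈ CGKE r (k + 1), CGKw r (k + 1) e ≤ 2 * (k + 1) * ((r : ℝ) + 1) * (r : ℝ) ^ k
  | 0 => by
    have hpath : ∀ l : List (CGKV 1), l.length = r + 2 →
        ∑ e ∈ (dSteps l).toFinset, CGKw r 1 e ≤ r + 1 := fun l hl => by
      simpa [hl] using sum_toFinset_dSteps_le zero_le_one
        (fun e => (CGKw_le_pow hr 0 e).trans_eq (pow_zero _)) l
    calc ∑ e ∈ CGKE r 1, CGKw r 1 e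
        ≤ ∑ e ∈ (dSteps (List.range (r + 2))).toFinset, CGKw r 1 e +
          ∑ e ∈ (dSteps (List.range (r + 2)).reverse).toFinset, CGKw r 1 e :=
          sum_union_le_add fun e _ => CGKw_nonneg r 1 e
      _ ≤ (r + 1) + (r + 1) := add_le_add (hpath _ List.length_range)
          (hpath _ (List.length_reverse.trans List.length_range))
      _ = _ := by ring
  | k + 1 => by
    have hpath : ∀ (a b : CGKV (k + 2)) (m : List (CGKV (k + 2))), m.length = r →
        ∑ e ∈ (dSteps (a :: m ++ [b])).toFinset, CGKw r (k + 2) e ≤ (r + 1) * (r : ℝ) ^ (k + 1) :=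
      fun a b m hm => by
        simpa [hm] using sum_toFinset_dSteps_le (f := CGKw r (k + 2)) (by positivity)
          (CGKw_le_pow hr (k + 1)) (a :: m ++ [b])
    have hcopies := (sum_biUnion_le_sum_sum (Finset.range r) _ (CGKw_nonneg r (k + 2))).trans
      ((sum_CGKw_copies_eq r k).trans_le
        (mul_le_mul_of_nonneg_left (sum_CGKw_CGKE_le hr k) (Nat.cast_nonneg r)))
    rw [CGKE]
    refine (sum_union_le_add fun e _ => CGKw_nonneg r _ e).trans ?_
    refine (add_le_add (sum_union_le_add fun e _ => CGKw_nonneg r _ e) le_rfl).trans ?_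
    refine (add_le_add (add_le_add hcopies (hpath _ _ _ ?_)) (hpath _ _ _ ?_)).trans_eq ?_
    · exact (List.length_map ..).trans List.length_range
    · exact List.length_reverse.trans ((List.length_map ..).trans List.length_range)
    · push_cast
      ring

lemma sum_CGKw_LE_le_sum_CGKE {r : ℕ} (hr : 1 ≤ r) (k : ℕ) :
    ∑ e ∈ LE r (k + 1), CGKw r (k + 1) e ≤ ∑ e ∈ CGKE r (k + 1), CGKw r (k + 1) e := by
  have hnn := CGKw_nonneg r (k + 1)
  have hdel : {(CGKsrc r (k + 1), Lv1 r (k + 1)), (Lv4 r (k + 1), CGKsrc r (k + 1))} ⊆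
      CGKE r (k + 1) :=
    Finset.insert_subset (src_Lv1_mem_CGKE hr k)
      (Finset.singleton_subset_iff.mpr (Lv4_src_mem_CGKE hr k))
  have hadd : ∑ e ∈ {(Lv2 r (k + 1), Lv1 r (k + 1)), (Lv4 r (k + 1), Lv3 r (k + 1))},
      CGKw r (k + 1) e ≤
      ∑ e ∈ {(CGKsrc r (k + 1), Lv1 r (k + 1)), (Lv4 r (k + 1), CGKsrc r (k + 1))},
      CGKw r (k + 1) e := by
    rw [Finset.sum_pair (a := (CGKsrc r (k + 1), _)) (by simp [CGKsrc_ne_Lv4]), CGKw_src_left,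
      CGKw_src_right, ← two_nsmul]
    refine (Finset.sum_le_card_nsmul _ _ _ fun e _ => CGKw_le_pow hr k e).trans ?_
    exact nsmul_le_nsmul_left (by positivity) Finset.card_le_two
  rw [LE]
  refine (sum_union_le_add fun e _ => hnn e).trans ((add_le_add le_rfl hadd).trans ?_)
  rw [← Finset.sum_union]
  · exact Finset.sum_le_sum_of_subset_of_nonneg
      (Finset.union_subset (Finset.filter_subset _ _) hdel) fun e _ _ => hnn e
  · rw [Finset.disjoint_right]
    intro e he
    simp only [Finset.mem_insert, Finset.mem_singleton] at he
    rcases he with rfl | rfl <;> simp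

theorem stmt10 (k r : ℕ) (hk : 1 ≤ k) (hr : 2 ≤ r) :
    ∑ e ∈ LE r k, CGKw r k e ≤ 2 * (k : ℝ) * ((r : ℝ) + 1) * (r : ℝ) ^ (k - 1) := by
  obtain ⟨k, rfl⟩ : ∃ k', k = k' + 1 := ⟨k - 1, by omega⟩
  have hr : 1 ≤ r := by omega
  calc ∑ e ∈ LE r (k + 1), CGKw r (k + 1) e ≤ ∑ e ∈ CGKE r (k + 1), CGKw r (k + 1) e :=
        sum_CGKw_LE_le_sum_CGKE hr k
    _ ≤ 2 * (k + 1) * ((r : ℝ) + 1) * (r : ℝ) ^ k := sum_CGKw_CGKE_le hr k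
    _ = _ := by simp

end TSPGap
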